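/- arXiv:1708.08593 — 5 statements merged into one kernel-verified Lean document; each statement's English description precedes it below -/
import Mathlib

section
/- Under the hypotheses of the realization lemma (m ≥ 2, σ_j ≥ 0, 0 < π_j < 1, 0 < ρ < 1, -∑π_j ≤ -ρ ≤ ∑ min(σ_j - π_j, 0)), the numbers ρ_j can moreover be chosen so that ρ_j > 0 for every j with σ_j < π_j, and -ρ_j < σ_j - π_j for every j with σ_j > π_j. -/
/-- Realization lemma, refined choice: the `ρ_j` can moreover be chosen so that
`ρ_j > 0` whenever `σ_j < π_j` and `-ρ_j < σ_j - π_j` whenever `σ_j > π_j`. -/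
theorem realization_lemma_refined (m : ℕ) (hm : 2 ≤ m) (σ π : Fin m → ℝ)
    (hσ : ∀ j, 0 ≤ σ j) (hπ : ∀ j, 0 < π j ∧ π j < 1)
    (ρ : ℝ) (hρ0 : 0 < ρ) (hρ1 : ρ < 1)
    (h1 : -∑ j, π j ≤ -ρ) (h2 : -ρ ≤ ∑ j, min (σ j - π j) 0) :
    ∃ r : Fin m → ℝ, (∀ j, 0 ≤ r j ∧ r j < 1) ∧
      (∀ j, -π j ≤ -r j ∧ -r j ≤ σ j - π j) ∧ (∑ j, r j = ρ) ∧
      (∀ j, σ j < π j → 0 < r j) ∧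
      (∀ j, π j < σ j → -r j < σ j - π j) := by
  set L : Fin m → ℝ := fun j => max (π j - σ j) 0 with hLdef
  have hL0 : ∀ j, 0 ≤ L j := fun j => le_max_right _ _
  have hLlb : ∀ j, π j - σ j ≤ L j := fun j => le_max_left _ _
  have hLπ : ∀ j, L j ≤ π j := fun j => max_le (by linarith [hσ j]) (hπ j).1.le
  have hmin : ∀ j, min (σ j - π j) 0 = -(L j) := by
    intro j
    rcases le_total (σ j) (π j) with h | h
    · rw [min_eq_left (by linarith)]
      simp only [hLdef]
      rw [max_eq_left (by linarith)]; ring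
    · rw [min_eq_right (by linarith)]
      simp only [hLdef]
      rw [max_eq_right (by linarith)]; ring
  have hS : ∑ j, L j ≤ ρ := by
    have h2' : -ρ ≤ ∑ j, -(L j) := by
      rw [← Finset.sum_congr rfl (fun j _ => hmin j)]; exact h2
    rw [Finset.sum_neg_distrib] at h2'
    linarith
  have hT : ρ ≤ ∑ j, π j := by linarith
  have hST : ∑ j, L j ≤ ∑ j, π j := Finset.sum_le_sum (fun j _ => hLπ j)
  rcases eq_or_lt_of_le hST with hST' | hST'
  · -- degenerate case: ∑ L = ∑ π, so ρ = ∑ L; take r = L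
    have hρS : ∑ j, L j = ρ := le_antisymm hS (by linarith)
    refine ⟨L, fun j => ⟨hL0 j, lt_of_le_of_lt (hLπ j) (hπ j).2⟩,
      fun j => ⟨by linarith [hLπ j], by linarith [hLlb j]⟩, hρS,
      fun j hj => lt_of_lt_of_le (by linarith : (0:ℝ) < π j - σ j) (hLlb j),
      fun j hj => by linarith [hL0 j]⟩
  · set t : ℝ := (ρ - ∑ j, L j) / (∑ j, π j - ∑ j, L j) with htdef
    have ht0 : 0 ≤ t := div_nonneg (by linarith) (by linarith)
    have ht1 : t ≤ 1 := by
      rw [htdef, div_le_one (by linarith)]; linarith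
    refine ⟨fun j => L j + t * (π j - L j), ?_, ?_, ?_, ?_, ?_⟩
    · intro j
      dsimp only
      have h1' : 0 ≤ t * (π j - L j) := mul_nonneg ht0 (by linarith [hLπ j])
      have h2' : t * (π j - L j) ≤ 1 * (π j - L j) :=
        mul_le_mul_of_nonneg_right ht1 (by linarith [hLπ j])
      constructor
      · linarith [hL0 j]
      · have := (hπ j).2; linarith
    · intro j
      dsimp only
      have h1' : 0 ≤ t * (π j - L j) := mul_nonneg ht0 (by linarith [hLπ j])
      have h2' : t * (π j - L j) ≤ 1 * (π j - L j) :=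
        mul_le_mul_of_nonneg_right ht1 (by linarith [hLπ j])
      exact ⟨by linarith, by linarith [hLlb j]⟩
    · have hsum : ∑ j, (L j + t * (π j - L j)) =
          (∑ j, L j) + t * ((∑ j, π j) - ∑ j, L j) := by
        rw [Finset.sum_add_distrib, ← Finset.mul_sum, Finset.sum_sub_distrib]
      rw [hsum, htdef, div_mul_cancel₀ _ (by linarith : (∑ j, π j) - ∑ j, L j ≠ 0)]
      ring
    · intro j hj
      dsimp only
      have h1' : 0 ≤ t * (π j - L j) := mul_nonneg ht0 (by linarith [hLπ j])
      have : 0 < π j - σ j := by linarith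
      linarith [hLlb j]
    · intro j hj
      dsimp only
      have h1' : 0 ≤ t * (π j - L j) := mul_nonneg ht0 (by linarith [hLπ j])
      linarith [hL0 j]
end

section
/- Under the hypotheses of the realization lemma, if additionally the inequality -ρ ≤ ∑_{j=1}^m min(σ_j - π_j, 0) is strict, then the ρ_j may be chosen so that ρ_j > 0 for all j and so that -ρ_j < σ_j - π_j (strictly) for every j with σ_j ≠ 0. -/
/-- Realization lemma, strict case: if `-ρ < ∑ min(σ_j - π_j, 0)` strictly, then the
`ρ_j` can be chosen with `ρ_j > 0` for all `j` and `-ρ_j < σ_j - π_j` whenever `σ_j ≠ 0`. -/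
theorem realization_lemma_strict (m : ℕ) (hm : 2 ≤ m) (σ π : Fin m → ℝ)
    (hσ : ∀ j, 0 ≤ σ j) (hπ : ∀ j, 0 < π j ∧ π j < 1)
    (ρ : ℝ) (hρ0 : 0 < ρ) (hρ1 : ρ < 1)
    (h1 : -∑ j, π j ≤ -ρ) (h2 : -ρ < ∑ j, min (σ j - π j) 0) :
    ∃ r : Fin m → ℝ, (∀ j, 0 ≤ r j ∧ r j < 1) ∧
      (∀ j, -π j ≤ -r j ∧ -r j ≤ σ j - π j) ∧ (∑ j, r j = ρ) ∧
      (∀ j, 0 < r j) ∧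
      (∀ j, σ j ≠ 0 → -r j < σ j - π j) := by
  set L : Fin m → ℝ := fun j => max (π j - σ j) 0 with hLdef
  have hLmin : ∀ j, L j = -min (σ j - π j) 0 := by
    intro j
    rcases le_total (σ j - π j) 0 with h | h
    · rw [min_eq_left h, hLdef]
      simp only
      rw [max_eq_left (by linarith)]
      ring
    · rw [min_eq_right h, hLdef]
      simp only
      rw [max_eq_right (by linarith)]
      ring
  have hLsum : ∑ j, L j = -∑ j, min (σ j - π j) 0 := by
    rw [← Finset.sum_neg_distrib]
    exact Finset.sum_congr rfl fun j _ => hLmin j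
  have hSL : ∑ j, L j < ρ := by
    rw [hLsum]; linarith
  have hSU : ρ ≤ ∑ j, π j := by linarith
  have hden : 0 < ∑ j, π j - ∑ j, L j := by linarith
  set t : ℝ := (ρ - ∑ j, L j) / (∑ j, π j - ∑ j, L j) with htdef
  have ht0 : 0 < t := div_pos (by linarith) hden
  have ht1 : t ≤ 1 := by
    rw [htdef, div_le_one hden]; linarith
  have hLnn : ∀ j, 0 ≤ L j := fun j => le_max_right _ _
  have hLle : ∀ j, L j ≤ π j := by
    intro j
    apply max_le (by linarith [hσ j]) (hπ j).1.le
  have hLlt : ∀ j, σ j ≠ 0 → L j < π j := by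
    intro j hj
    have : 0 < σ j := lt_of_le_of_ne (hσ j) (Ne.symm hj)
    apply max_lt (by linarith) (hπ j).1
  refine ⟨fun j => L j + t * (π j - L j), ?_, ?_, ?_, ?_, ?_⟩
  · intro j
    dsimp only
    constructor
    · have := hLle j
      nlinarith [hLnn j, ht0.le]
    · have h1 : L j + t * (π j - L j) ≤ π j := by
        nlinarith [hLle j]
      linarith [(hπ j).2]
  · intro j
    dsimp only
    constructor
    · have : L j + t * (π j - L j) ≤ π j := by nlinarith [hLle j]
      linarith
    · have hge : π j - σ j ≤ L j := le_max_left _ _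
      have : L j ≤ L j + t * (π j - L j) := by nlinarith [hLle j, ht0.le]
      linarith
  · have : ∑ j, (L j + t * (π j - L j)) = ∑ j, L j + t * (∑ j, π j - ∑ j, L j) := by
      rw [Finset.sum_add_distrib, ← Finset.mul_sum, Finset.sum_sub_distrib]
    rw [this, htdef, div_mul_cancel₀ _ (ne_of_gt hden)]
    ring
  · intro j
    dsimp only
    rcases eq_or_ne (σ j) 0 with h | h
    · have hLj : L j = π j := by
        rw [hLdef]; simp only [h, sub_zero]
        exact max_eq_left (hπ j).1.le
      rw [hLj]
      nlinarith [(hπ j).1]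
    · have := hLlt j h
      nlinarith [hLnn j]
  · intro j hj
    dsimp only
    have hlt := hLlt j hj
    have hge : π j - σ j ≤ L j := le_max_left _ _
    nlinarith
end

section
/- Let m ≥ 2, n ≥ 1, and let σ_j, π_j > 0 for j = 1,…,m. Define φ(ν) := ∑_{j=1}^m min(σ_j - ν_j - π_j, 0) on the set N = {ν ∈ ℕ_0^m : ν_1 + … + ν_m ≤ n}, and set μ := min_j (σ_j - π_j). If μ ≥ 0, then min_{ν ∈ N} φ(ν) = min_j min(σ_j - π_j - n, 0). -/
lemma aux_min_sum {ι : Type*} (s : Finset ι) (a : ι → ℝ) (μ : ℝ) (hμ : 0 ≤ μ)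
    (ha : ∀ i ∈ s, 0 ≤ a i) :
    min (μ - ∑ i ∈ s, a i) 0 ≤ ∑ i ∈ s, min (μ - a i) 0 := by
  classical
  induction s using Finset.induction with
  | empty => simp [hμ]
  | @insert x s hx ih =>
    rw [Finset.sum_insert hx, Finset.sum_insert hx]
    have h1 := ih (fun i hi => ha i (Finset.mem_insert_of_mem hi))
    have hax := ha x (Finset.mem_insert_self x s)
    have hs : 0 ≤ ∑ i ∈ s, a i := Finset.sum_nonneg fun i hi => ha i (Finset.mem_insert_of_mem hi)
    rcases le_or_gt (a x) μ with h | h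
    · have : min (μ - a x) 0 = 0 := min_eq_right (by linarith)
      rw [this, zero_add]
      calc min (μ - (a x + ∑ i ∈ s, a i)) 0 ≤ min (μ - ∑ i ∈ s, a i) 0 := by
            apply min_le_min _ le_rfl; linarith
        _ ≤ _ := h1
    · have h2 : min (μ - a x) 0 = μ - a x := min_eq_left (by linarith)
      have h3 : min (μ - (a x + ∑ i ∈ s, a i)) 0 = μ - (a x + ∑ i ∈ s, a i) :=
        min_eq_left (by linarith)
      have h4 : (0:ℝ) - ∑ i ∈ s, a i ≤ ∑ i ∈ s, min (μ - a i) 0 := by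
        calc (0:ℝ) - ∑ i ∈ s, a i = ∑ i ∈ s, (0 - a i) := by rw [Finset.sum_sub_distrib]; simp
          _ ≤ _ := Finset.sum_le_sum fun i hi => by
              have := ha i (Finset.mem_insert_of_mem hi)
              simp [le_min_iff]; constructor <;> linarith
      rw [h2, h3]; linarith


/-- Minimization lemma, case `μ ≥ 0`: the minimum of
`φ(ν) = ∑ min(σ_j - ν_j - π_j, 0)` over `ν ∈ ℕ₀^m` with `∑ ν_j ≤ n` equals
`min_j min(σ_j - π_j - n, 0)`. -/
theorem minimization_lemma_nonneg (m n : ℕ) (hm : 2 ≤ m) (hn : 1 ≤ n)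
    (σ π : Fin m → ℝ) (hσ : ∀ j, 0 < σ j) (hπ : ∀ j, 0 < π j)
    (hμ : ∀ j, 0 ≤ σ j - π j) :
    IsLeast {x : ℝ | ∃ ν : Fin m → ℕ, (∑ j, ν j) ≤ n ∧
        x = ∑ j, min (σ j - (ν j : ℝ) - π j) 0}
      (Finset.univ.inf' ⟨⟨0, by omega⟩, Finset.mem_univ _⟩
        (fun j => min (σ j - π j - (n : ℝ)) 0)) := by
  constructor
  · -- membership: take ν = n · e_{j₀} where j₀ achieves the inf
    obtain ⟨j₀, -, hj₀⟩ := Finset.exists_mem_eq_inf' (α := ℝ)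
      ⟨⟨0, by omega⟩, Finset.mem_univ _⟩ (fun j => min (σ j - π j - (n : ℝ)) 0)
    refine ⟨fun j => if j = j₀ then n else 0, ?_, ?_⟩
    · simp
    · rw [hj₀, Finset.sum_eq_single_of_mem j₀ (Finset.mem_univ _)]
      · simp [min_comm]; ring_nf
      · intro j _ hj
        simp only [if_neg hj, Nat.cast_zero]
        have := hμ j
        rw [min_eq_right (by linarith)]
  · -- lower bound
    rintro x ⟨ν, hν, rfl⟩
    obtain ⟨j₁, -, hj₁⟩ := Finset.exists_min_image (Finset.univ : Finset (Fin m))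
      (fun j => σ j - π j) ⟨⟨0, by omega⟩, Finset.mem_univ _⟩
    set μ := σ j₁ - π j₁ with hμdef
    have h1 : Finset.univ.inf' ⟨⟨0, by omega⟩, Finset.mem_univ _⟩
        (fun j => min (σ j - π j - (n : ℝ)) 0) ≤ min (μ - (n:ℝ)) 0 :=
      Finset.inf'_le _ (Finset.mem_univ j₁)
    have h2 : min (μ - (n:ℝ)) 0 ≤ min (μ - ∑ j, (ν j : ℝ)) 0 := by
      apply min_le_min _ le_rfl
      have : (∑ j, (ν j : ℝ)) ≤ n := by
        push_cast [← Nat.cast_sum]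
        exact_mod_cast hν
      linarith
    have h3 : min (μ - ∑ j, (ν j : ℝ)) 0 ≤ ∑ j, min (μ - (ν j : ℝ)) 0 :=
      aux_min_sum Finset.univ (fun j => (ν j : ℝ)) μ (hμ j₁) (fun i _ => Nat.cast_nonneg _)
    have h4 : ∑ j, min (μ - (ν j : ℝ)) 0 ≤ ∑ j, min (σ j - (ν j : ℝ) - π j) 0 :=
      Finset.sum_le_sum fun j _ => by
        apply min_le_min _ le_rfl
        have := hj₁ j (Finset.mem_univ j)
        linarith
    linarith
end

section
/- Let m ≥ 2, n ≥ 1, and σ_j, π_j > 0 for j = 1,…,m. Set M_- := {j : σ_j - π_j < 0} and suppose μ := min_j (σ_j - π_j) < 0. Then the minimum over ν ∈ ℕ_0^m with ∑ ν_j ≤ n of φ(ν) := ∑_{j=1}^m min(σ_j - ν_j - π_j, 0) equals ∑_{j ∈ M_-} (σ_j - π_j) - n. -/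
/-- Minimization lemma, case `μ < 0`: the minimum of
`φ(ν) = ∑ min(σ_j - ν_j - π_j, 0)` over `ν ∈ ℕ₀^m` with `∑ ν_j ≤ n` equals
`∑_{j ∈ M₋} (σ_j - π_j) - n`, where `M₋ = {j : σ_j - π_j < 0}`. -/
theorem minimization_lemma_neg (m n : ℕ) (hm : 2 ≤ m) (hn : 1 ≤ n)
    (σ π : Fin m → ℝ) (hσ : ∀ j, 0 < σ j) (hπ : ∀ j, 0 < π j)
    (hμ : ∃ j, σ j - π j < 0) :
    IsLeast {x : ℝ | ∃ ν : Fin m → ℕ, (∑ j, ν j) ≤ n ∧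
        x = ∑ j, min (σ j - (ν j : ℝ) - π j) 0}
      ((∑ j ∈ Finset.univ.filter (fun j => σ j - π j < 0), (σ j - π j)) - (n : ℝ)) := by
  obtain ⟨j₀, hj₀⟩ := hμ
  have hsplit : ∑ j ∈ Finset.univ.filter (fun j => σ j - π j < 0), (σ j - π j)
      = ∑ j, min (σ j - π j) 0 := by
    rw [Finset.sum_filter]
    refine Finset.sum_congr rfl fun j _ => ?_
    by_cases h : σ j - π j < 0
    · simp [h, min_eq_left h.le]
    · simp [h, min_eq_right (le_of_not_gt h)]
  constructor
  · refine ⟨fun j => if j = j₀ then n else 0, ?_, ?_⟩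
    · simp
    · have key : ∀ j, min (σ j - ((if j = j₀ then (n:ℕ) else 0 : ℕ) : ℝ) - π j) 0
          = min (σ j - π j) 0 - (if j = j₀ then (n : ℝ) else 0) := by
        intro j
        by_cases h : j = j₀
        · subst h
          have h1 : σ j - (n : ℝ) - π j < 0 := by
            have : (1 : ℝ) ≤ n := by exact_mod_cast hn
            linarith
          simp [min_eq_left h1.le, min_eq_left hj₀.le]
          ring
        · simp [h]
      rw [hsplit, Finset.sum_congr rfl fun j _ => key j, Finset.sum_sub_distrib]
      simp
  · rintro x ⟨ν, hν, rfl⟩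
    rw [hsplit]
    have key : ∀ j, min (σ j - π j) 0 - (ν j : ℝ) ≤ min (σ j - (ν j : ℝ) - π j) 0 := by
      intro j
      have h0 : (0 : ℝ) ≤ ν j := Nat.cast_nonneg _
      rcases le_or_gt (σ j - (ν j : ℝ) - π j) 0 with h | h
      · rw [min_eq_left h]
        rcases le_or_gt (σ j - π j) 0 with h2 | h2
        · rw [min_eq_left h2]; ring_nf; linarith
        · rw [min_eq_right h2.le]; linarith
      · rw [min_eq_right h.le]
        rcases le_or_gt (σ j - π j) 0 with h2 | h2
        · rw [min_eq_left h2]; linarith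
        · rw [min_eq_right h2.le]; linarith
    calc (∑ j, min (σ j - π j) 0) - (n : ℝ)
        ≤ (∑ j, min (σ j - π j) 0) - ∑ j, (ν j : ℝ) := by
          have : (∑ j, (ν j : ℝ)) ≤ n := by exact_mod_cast hν
          linarith
      _ = ∑ j, (min (σ j - π j) 0 - (ν j : ℝ)) := by rw [Finset.sum_sub_distrib]
      _ ≤ _ := Finset.sum_le_sum fun j _ => key j
end

section
/- Let m ≥ 2, n ≥ 1, σ_j, π_j > 0 with μ := min_j (σ_j - π_j) < 0, and let M_+ := {j : σ_j - π_j > 0}, M_- := {j : σ_j - π_j < 0}. Then ν ∈ ℕ_0^m with ∑ ν_j ≤ n attains the minimum ∑_{j ∈ M_-}(σ_j - π_j) - n of φ(ν) := ∑_j min(σ_j - ν_j - π_j, 0) if and only if ∑ ν_j = n and ν_j = 0 for all j ∈ M_+. -/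
lemma term_ge (d k : ℝ) (hk : 0 ≤ k) : min d 0 - k ≤ min (d - k) 0 := by
  rcases le_total d 0 with h | h
  · have : min d 0 = d := min_eq_left h
    have h2 : min (d - k) 0 = d - k := min_eq_left (by linarith)
    rw [this, h2]
  · have : min d 0 = 0 := min_eq_right h
    rw [this]
    exact le_min (by linarith) (by linarith)

lemma term_eq (d k : ℝ) (hk : 0 ≤ k) (hd : 0 < d)
    (he : min d 0 - k = min (d - k) 0) : k = 0 := by
  rw [min_eq_right hd.le] at he
  by_contra hne
  have hk' : 0 < k := lt_of_le_of_ne hk (Ne.symm hne)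
  have h1 : -k < d - k := by linarith
  have h2 : -k < (0:ℝ) := by linarith
  have := lt_min h1 h2
  linarith

/-- Minimization lemma, characterization of minimizers for `μ < 0`: an admissible `ν`
attains the minimum `∑_{j ∈ M₋}(σ_j - π_j) - n` if and only if `∑ ν_j = n` and `ν_j = 0`
for all `j` with `σ_j - π_j > 0`. -/
theorem minimization_lemma_minimizers (m n : ℕ) (hm : 2 ≤ m) (hn : 1 ≤ n)
    (σ π : Fin m → ℝ) (hσ : ∀ j, 0 < σ j) (hπ : ∀ j, 0 < π j)
    (hμ : ∃ j, σ j - π j < 0)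
    (ν : Fin m → ℕ) (hν : ∑ j, ν j ≤ n) :
    (∑ j, min (σ j - (ν j : ℝ) - π j) 0
        = (∑ j ∈ Finset.univ.filter (fun j => σ j - π j < 0), (σ j - π j)) - (n : ℝ))
      ↔ ((∑ j, ν j) = n ∧ ∀ j, 0 < σ j - π j → ν j = 0) := by
  have hS : (∑ j ∈ Finset.univ.filter (fun j => σ j - π j < 0), (σ j - π j))
      = ∑ j, min (σ j - π j) 0 := by
    rw [Finset.sum_filter]
    refine Finset.sum_congr rfl fun j _ => ?_
    rcases lt_or_ge (σ j - π j) 0 with h | h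
    · rw [if_pos h, min_eq_left h.le]
    · rw [if_neg (not_lt.mpr h), min_eq_right h]
  have hterm : ∀ j (_ : j ∈ Finset.univ),
      min (σ j - π j) 0 - (ν j : ℝ) ≤ min (σ j - (ν j : ℝ) - π j) 0 := by
    intro j _
    have := term_ge (σ j - π j) (ν j) (Nat.cast_nonneg _)
    convert this using 2 <;> ring
  have hsum_ge : (∑ j, min (σ j - π j) 0) - (∑ j, (ν j : ℝ))
      ≤ ∑ j, min (σ j - (ν j : ℝ) - π j) 0 := by
    rw [← Finset.sum_sub_distrib]
    exact Finset.sum_le_sum hterm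
  have hcast : (∑ j, (ν j : ℝ)) = ((∑ j, ν j : ℕ) : ℝ) := by
    rw [Nat.cast_sum]
  constructor
  · intro h
    rw [hS] at h
    -- ∑ν = n
    have hge : (n : ℝ) ≤ ∑ j, (ν j : ℝ) := by linarith [hsum_ge, h.le]
    have hsum_n : (∑ j, ν j) = n := by
      refine le_antisymm hν ?_
      have : (n : ℝ) ≤ ((∑ j, ν j : ℕ) : ℝ) := by rw [← hcast]; exact hge
      exact_mod_cast this
    refine ⟨hsum_n, ?_⟩
    -- sum equality implies termwise equality
    have hsumeq : ∑ j, (min (σ j - π j) 0 - (ν j : ℝ))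
        = ∑ j, min (σ j - (ν j : ℝ) - π j) 0 := by
      rw [Finset.sum_sub_distrib, hcast, hsum_n, h]
    have htermeq := (Finset.sum_eq_sum_iff_of_le hterm).mp hsumeq
    intro j hj
    have := htermeq j (Finset.mem_univ j)
    have heq : min (σ j - π j) 0 - (ν j : ℝ) = min (σ j - π j - (ν j : ℝ)) 0 := by
      rw [this]; ring_nf
    have := term_eq (σ j - π j) (ν j) (Nat.cast_nonneg _) hj heq
    exact_mod_cast this
  · rintro ⟨hsum_n, hzero⟩
    rw [hS]
    have : ∀ j ∈ Finset.univ,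
        min (σ j - (ν j : ℝ) - π j) 0 = min (σ j - π j) 0 - (ν j : ℝ) := by
      intro j _
      rcases lt_or_ge 0 (σ j - π j) with h | h
      · rw [hzero j h]
        simp
      · rw [min_eq_left h, min_eq_left (by
          have : (0:ℝ) ≤ (ν j : ℝ) := Nat.cast_nonneg _
          linarith)]
        ring
    rw [Finset.sum_congr rfl this, Finset.sum_sub_distrib, hcast, hsum_n]
end
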